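/- Let a > 0 be a real number and let P ∈ E_a(ℝ) be a point of infinite order. Then λ_∞(P) > (1/4)·log a − (1/12)·log|Δ(E_a)|. -/

import Mathlib

/-!
Write `s = √a` and `x_k = x(2^k P')`. On `E'_{s²}` every `x_k` exceeds `s`, and the duplication
formula reads `x_{k+1} · 4y_k² = x_k⁴ z(x_k)`. From it, `log t ≥ 1 - 1/t` gives
`log z(x_k) ≥ c(x_{k+1}) - 4 c(x_k)` for `c(x) = s(x - s)/x² ≥ 0`. Weighted by `4^{-k}` these bounds
telescope, so `S ≥ -c(x_1)`, and the level-0 bound then leaves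
`λ_∞(P) + (1/12) log|Δ| ≥ (log x_0 - c(x_0))/2 > (log s)/2 = (1/4) log a`,
the last step being `log t ≥ 1 - 1/t` once more, at `t = x_0/s`.
-/

open Filter Real

/-- The translated elliptic curve `E'_a : y² = x³ − 3√a·x² + 4a·x − 2a^{3/2}` over `ℝ`,
obtained from `E_a : y² = x³ + a·x` via `x ↦ x + √a`. -/
noncomputable def E'curve (a : ℝ) : WeierstrassCurve.Affine ℝ :=
  { a₁ := 0, a₂ := -3 * Real.sqrt a, a₃ := 0, a₄ := 4 * a, a₆ := -2 * a ^ ((3 : ℝ) / 2) }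

/-- The x-coordinate of a point (with junk value `0` at the identity `O`). -/
def xc {F : Type*} [Field F] {W : WeierstrassCurve.Affine F} : W.Point → F
  | .zero => 0
  | @WeierstrassCurve.Affine.Point.some _ _ _ x _ _ => x

/-- For a finite point `Q` of `E'_a` with `x(Q) = x`, the quantity
`z(Q) = 1 − 8a·x⁻² + 16·a^{3/2}·x⁻³ − 8a²·x⁻⁴` from Tate's series. -/
noncomputable def zE' (a x : ℝ) : ℝ :=
  1 - 8 * a / x ^ 2 + 16 * a ^ ((3 : ℝ) / 2) / x ^ 3 - 8 * a ^ 2 / x ^ 4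

/-- The archimedean local height of a point `P ∈ E_a(ℝ)` of infinite order (`a > 0`),
computed on the translated curve `E'_a` at the corresponding point `P'`:
`λ_∞(P) = (1/8)·log(x(P')⁴·z(P')) + (1/8)·S − (1/12)·log|Δ(E_a)|`, where `S` is the
(hypothesized) value of the series `∑_{k≥1} 4^{−k}·log z(2^kP')` and `Δ(E_a) = −64a³`. -/
noncomputable def lamInf' (a : ℝ) {W : WeierstrassCurve.Affine ℝ} (P' : W.Point) (S : ℝ) : ℝ :=
  (1 / 8) * Real.log ((xc P') ^ 4 * zE' a (xc P')) + (1 / 8) * S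
    - (1 / 12) * Real.log |(-64) * a ^ 3|

lemma sq_rpow_three_halves {s : ℝ} (hs : 0 ≤ s) : (s ^ 2) ^ ((3 : ℝ) / 2) = s ^ 3 := by
  rw [Real.rpow_div_two_eq_sqrt _ (sq_nonneg s), Real.sqrt_sq hs]
  norm_num

/-- `x⁴·z(x)` as a polynomial in `s = √a`; it is also the numerator of the duplication
formula `x(2Q) = doublingNum s x / (4 y²)` on `E'_{s²}`. -/
def doublingNum (s x : ℝ) : ℝ := x ^ 4 - 8 * s ^ 2 * x ^ 2 + 16 * s ^ 3 * x - 8 * s ^ 4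

lemma doublingNum_pos {s x : ℝ} (hs : 0 ≤ s) (hx : s < x) : 0 < doublingNum s x := by
  have ht : 0 < x - s := sub_pos.2 hx
  have : doublingNum s x
      = s ^ 4 + (x - s) ^ 4 + 4 * s * (x - s) * (2 * s - x) ^ 2 + 6 * s ^ 2 * (x - s) ^ 2 := by
    unfold doublingNum; ring
  rw [this]
  positivity

lemma zE'_sq_eq {s x : ℝ} (hs : 0 ≤ s) (hx : x ≠ 0) :
    zE' (s ^ 2) x = doublingNum s x / x ^ 4 := by
  rw [zE', sq_rpow_three_halves hs, doublingNum]
  field_simp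

namespace E'curve

open WeierstrassCurve.Affine

variable {s : ℝ}

lemma sq_equation_iff (hs : 0 ≤ s) (x y : ℝ) :
    (E'curve (s ^ 2)).Equation x y ↔ y ^ 2 = (x - s) * ((x - s) ^ 2 + s ^ 2) := by
  rw [equation_iff]
  simp only [E'curve, Real.sqrt_sq hs, sq_rpow_three_halves hs]
  constructor <;> intro h <;> linear_combination h

lemma sq_xc_two_nsmul_mul {x y : ℝ} (hs : 0 ≤ s) (h : (E'curve (s ^ 2)).Nonsingular x y)
    (hy : y ≠ 0) : xc (2 • Point.some x y h) * (4 * y ^ 2) = doublingNum s x := by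
  have hy' : y ≠ (E'curve (s ^ 2)).negY x y := by
    simp only [negY, E'curve]
    intro h'
    exact hy (by linarith)
  rw [two_nsmul, Point.add_self_of_Y_ne hy']
  show (E'curve (s ^ 2)).addX x x ((E'curve (s ^ 2)).slope x x y y) * _ = _
  rw [slope_of_Y_ne rfl hy']
  have hy2 := (sq_equation_iff hs x y).1 h.1
  simp only [addX, negY, E'curve, Real.sqrt_sq hs, doublingNum]
  have h2y : y - (-y - 0 * x - 0) = 2 * y := by ring
  rw [h2y]
  field_simp
  linear_combination (48 * s - 32 * x) * hy2

lemma sq_lt_xc_and_xc_two_nsmul (hs : 0 ≤ s) {Q : (E'curve (s ^ 2)).Point} (h2 : 2 • Q ≠ 0) :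
    s < xc Q ∧
      xc (2 • Q) * (4 * ((xc Q - s) * ((xc Q - s) ^ 2 + s ^ 2))) = doublingNum s (xc Q) := by
  rcases Q with _ | @⟨x, y, h⟩
  · exact absurd (nsmul_zero (M := (E'curve (s ^ 2)).Point) 2) h2
  have hy : y ≠ 0 := by
    rintro rfl
    rw [two_nsmul, Point.add_self_of_Y_eq] at h2
    · exact h2 rfl
    · simp [negY, E'curve]
  have hy2 := (sq_equation_iff hs x y).1 h.1
  refine ⟨?_, hy2 ▸ sq_xc_two_nsmul_mul hs h hy⟩
  have : 0 < (x - s) * ((x - s) ^ 2 + s ^ 2) := hy2 ▸ by positivity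
  exact sub_pos.1 (pos_of_mul_pos_left this (by positivity))

end E'curve

noncomputable def heightCorrection (s x : ℝ) : ℝ := s * (x - s) / x ^ 2

lemma heightCorrection_sub_le_log_zE' {s x x₁ : ℝ} (hs : 0 < s) (hx : s < x)
    (hx₁ : x₁ * (4 * ((x - s) * ((x - s) ^ 2 + s ^ 2))) = doublingNum s x) :
    heightCorrection s x₁ - 4 * heightCorrection s x ≤ log (zE' (s ^ 2) x) := by
  have ht : 0 < x - s := sub_pos.2 hx
  have hx0 : 0 < x := hs.trans hx
  have hG : 0 < doublingNum s x := doublingNum_pos hs.le hx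
  have hU : 0 < 4 * ((x - s) * ((x - s) ^ 2 + s ^ 2)) := by positivity
  have hq : 0 ≤ x ^ 4 - 2 * s * x ^ 3 - 2 * s ^ 2 * x ^ 2 + 8 * s ^ 3 * x - 4 * s ^ 4 := by
    have : x ^ 4 - 2 * s * x ^ 3 - 2 * s ^ 2 * x ^ 2 + 8 * s ^ 3 * x - 4 * s ^ 4
        = (s ^ 2 - (x - s) ^ 2) ^ 2 + 2 * s * (x - s) * (s ^ 2 + (x - s) ^ 2) := by ring
    rw [this]; positivity
  have hgap : 1 - x ^ 4 / doublingNum s x - (heightCorrection s x₁ - 4 * heightCorrection s x)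
      = 16 * s ^ 2 * (x - s) ^ 2 * (x - 2 * s) ^ 2
          * (x ^ 4 - 2 * s * x ^ 3 - 2 * s ^ 2 * x ^ 2 + 8 * s ^ 3 * x - 4 * s ^ 4)
        / (doublingNum s x ^ 2 * x ^ 2) := by
    rw [(eq_div_iff hU.ne').2 hx₁, heightCorrection, heightCorrection]
    field_simp
    unfold doublingNum
    ring
  have hlog := Real.one_sub_inv_le_log_of_pos (div_pos hG (pow_pos hx0 4))
  rw [inv_div, ← zE'_sq_eq hs.le hx0.ne'] at hlog
  have : 0 ≤ 1 - x ^ 4 / doublingNum s x - (heightCorrection s x₁ - 4 * heightCorrection s x) :=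
    hgap ▸ by positivity
  linarith

lemma log_lt_log_sub_heightCorrection {s x : ℝ} (hs : 0 < s) (hx : s < x) :
    log s < log x - heightCorrection s x := by
  have hx0 : 0 < x := hs.trans hx
  have hlog := Real.one_sub_inv_le_log_of_pos (div_pos hx0 hs)
  rw [inv_div, Real.log_div hx0.ne' hs.ne'] at hlog
  have hgap : 1 - s / x - heightCorrection s x = (x - s) ^ 2 / x ^ 2 := by
    rw [heightCorrection]
    field_simp
  have : 0 < (x - s) ^ 2 / x ^ 2 := by
    have := sub_pos.2 hx
    positivity
  linarith

lemma neg_le_of_hasSum_of_sub_le {f g : ℕ → ℝ} {S : ℝ} (hS : HasSum f S) (hg : ∀ k, 0 ≤ g k)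
    (hfg : ∀ k, g (k + 1) - g k ≤ f k) : -g 0 ≤ S := by
  refine ge_of_tendsto' hS.tendsto_sum_nat fun n => ?_
  have := Finset.sum_le_sum fun k (_ : k ∈ Finset.range n) => hfg k
  rw [Finset.sum_range_sub g n] at this
  linarith [hg n]

lemma neg_heightCorrection_le_of_hasSum {s : ℝ} (hs : 0 < s) {x : ℕ → ℝ} (hx : ∀ k, s < x k)
    (hdbl : ∀ k,
      x (k + 1) * (4 * ((x k - s) * ((x k - s) ^ 2 + s ^ 2))) = doublingNum s (x k))
    {S : ℝ} (hS : HasSum (fun k => (1 / 4 : ℝ) ^ (k + 1) * log (zE' (s ^ 2) (x (k + 1)))) S) :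
    -heightCorrection s (x 1) ≤ S := by
  have hnonneg (k : ℕ) : 0 ≤ (1 / 4 : ℝ) ^ k * heightCorrection s (x (k + 1)) := by
    have := sub_pos.2 (hx (k + 1))
    have := hs.trans (hx (k + 1))
    unfold heightCorrection
    positivity
  have hstep (k : ℕ) : (1 / 4 : ℝ) ^ (k + 1) * heightCorrection s (x (k + 1 + 1))
      - (1 / 4 : ℝ) ^ k * heightCorrection s (x (k + 1))
      ≤ (1 / 4 : ℝ) ^ (k + 1) * log (zE' (s ^ 2) (x (k + 1))) :=
    calc (1 / 4 : ℝ) ^ (k + 1) * heightCorrection s (x (k + 1 + 1))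
          - (1 / 4 : ℝ) ^ k * heightCorrection s (x (k + 1))
        = (1 / 4 : ℝ) ^ (k + 1)
          * (heightCorrection s (x (k + 1 + 1)) - 4 * heightCorrection s (x (k + 1))) := by ring
      _ ≤ _ := mul_le_mul_of_nonneg_left
          (heightCorrection_sub_le_log_zE' hs (hx (k + 1)) (hdbl (k + 1))) (by positivity)
  simpa using neg_le_of_hasSum_of_sub_le hS hnonneg hstep

/-- Lemma 3.4(a): for `a > 0` and a point `P ∈ E_a(ℝ)` of infinite order (given by the
corresponding point `P'` of infinite order on the translated curve `E'_a`),
`λ_∞(P) > (1/4)·log a − (1/12)·log|Δ(E_a)|`. -/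
theorem arch_a_pos_part_a (a : ℝ) (ha : 0 < a)
    (P' : (E'curve a).Point)
    (hP : ∀ n : ℕ, 0 < n → n • P' ≠ 0)
    (S : ℝ)
    (hS : HasSum
      (fun k : ℕ => (1 / 4 : ℝ) ^ (k + 1) * Real.log (zE' a (xc ((2 ^ (k + 1)) • P')))) S) :
    lamInf' a P' S > (1 / 4) * Real.log a - (1 / 12) * Real.log |(-64) * a ^ 3| := by
  obtain ⟨s, hs, rfl⟩ : ∃ s : ℝ, 0 < s ∧ s ^ 2 = a :=
    ⟨Real.sqrt a, Real.sqrt_pos.mpr ha, Real.sq_sqrt ha.le⟩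
  set x : ℕ → ℝ := fun k => xc ((2 ^ k) • P') with hx
  have horbit (k : ℕ) : s < x k ∧
      x (k + 1) * (4 * ((x k - s) * ((x k - s) ^ 2 + s ^ 2))) = doublingNum s (x k) := by
    have hdouble : (2 ^ (k + 1)) • P' = 2 • (2 ^ k) • P' := by rw [pow_succ 2 k, mul_nsmul]
    have h2 : 2 • (2 ^ k) • P' ≠ 0 := hdouble ▸ hP _ (by positivity)
    simp only [hx, hdouble]
    exact E'curve.sq_lt_xc_and_xc_two_nsmul hs.le h2
  have hS' := neg_heightCorrection_le_of_hasSum hs (fun k => (horbit k).1) (fun k => (horbit k).2)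
    hS
  have hz := heightCorrection_sub_le_log_zE' hs (horbit 0).1 (horbit 0).2
  have hlog := log_lt_log_sub_heightCorrection hs (horbit 0).1
  have hx₀ : x 0 = xc P' := by simp [hx]
  have hx₀pos : 0 < x 0 := hs.trans (horbit 0).1
  have hzpos : 0 < zE' (s ^ 2) (x 0) := by
    rw [zE'_sq_eq hs.le hx₀pos.ne']
    exact div_pos (doublingNum_pos hs.le (horbit 0).1) (by positivity)
  rw [lamInf', ← hx₀, Real.log_mul (by positivity) hzpos.ne', Real.log_pow, Real.log_pow]
  push_cast
  linarith
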